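/- Up to isomorphism there are exactly n+1 semigroups of the form (IS_n, *_α) with α ∈ IS_n. -/

import Mathlib

/-- `PInj n` : the symmetric inverse semigroup `IS_n`, modeled as partial
injective maps `Fin n → Option (Fin n)`. -/
abbrev PInj (n : ℕ) : Type :=
  {f : Fin n → Option (Fin n) // ∀ x y z : Fin n, f x = some z → f y = some z → x = y}

/-- Composition, applying `f` first, then `g` (left-to-right, as in the paper). -/
def PInj.comp {n : ℕ} (f g : PInj n) : PInj n :=
  ⟨fun x => (f.1 x).bind g.1, by
    intro x y z hx hy
    rcases Option.bind_eq_some_iff.mp hx with ⟨w, hfw, hgw⟩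
    rcases Option.bind_eq_some_iff.mp hy with ⟨v, hfv, hgv⟩
    cases g.2 w v z hgw hgv
    exact f.2 x y w hfw hfv⟩

/-- The deformed multiplication `x *_α y = x · α · y` on `PInj n`. -/
def PInj.dmul {n : ℕ} (α x y : PInj n) : PInj n := (x.comp α).comp y

/-- The range (image) of a partial injection. -/
def PInj.ran {n : ℕ} (f : PInj n) : Set (Fin n) := {y | ∃ x, f.1 x = some y}

/-- The domain of a partial injection. -/
def PInj.dom {n : ℕ} (f : PInj n) : Set (Fin n) := {x | (f.1 x).isSome}

/-- The rank of a partial injection: the cardinality of its range. -/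
noncomputable def PInj.rank {n : ℕ} (f : PInj n) : ℕ := f.ran.ncard

/-- The permutation `σ ∈ S_n` viewed as an element of `IS_n`. -/
def PInj.ofPerm {n : ℕ} (σ : Equiv.Perm (Fin n)) : PInj n :=
  ⟨fun x => some (σ x), by
    intro x y z hx hy
    exact σ.injective ((Option.some.inj hx).trans (Option.some.inj hy).symm)⟩

/-!
Write `ε_k = idLT n k` for the partial identity on `{0, …, k - 1}`. Enumerating the domain of `α`
and extending two injections to permutations gives `α = σ ε_k τ` with `σ, τ ∈ S_n`, and then
`x ↦ τ x σ` is an isomorphism from `(IS_n, *_α)` onto `(IS_n, *_{ε_k})`. An isomorphism maps the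
set of all products of its source onto that of its target. For `j < k` every product `x *_{ε_j} y`
is also a product for `ε_k` (as `ε_j = ε_j ε_k ε_j`) but has rank at most `j`, so `ε_k` itself is
missed; hence the number of products separates `ε_0, …, ε_n`.
-/
theorem Set.image_image2_univ_of_equiv {M N : Type*} (f : M → M → M) (g : N → N → N) (e : M ≃ N)
    (he : ∀ x y, e (f x y) = g (e x) (e y)) :
    e '' Set.image2 f Set.univ Set.univ = Set.image2 g Set.univ Set.univ := by
  rw [Set.image_image2]
  simp_rw [he]
  rw [← Set.image2_image_left (fun a b => g a (e b)) e, ← Set.image2_image_right g e,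
    Set.image_univ_of_surjective e.surjective]

namespace PInj

variable {n : ℕ}

theorem ext {f g : PInj n} (h : ∀ x, f.1 x = g.1 x) : f = g :=
  Subtype.ext (funext h)

@[simp] theorem comp_apply (f g : PInj n) (x : Fin n) : (f.comp g).1 x = (f.1 x).bind g.1 :=
  rfl

theorem comp_assoc (f g h : PInj n) : (f.comp g).comp h = f.comp (g.comp h) :=
  ext fun x => by simp only [comp_apply, Option.bind_assoc]; rfl

@[simp] theorem ofPerm_apply (σ : Equiv.Perm (Fin n)) (x : Fin n) :
    (ofPerm σ).1 x = some (σ x) :=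
  rfl

def idLT (n k : ℕ) : PInj n :=
  ⟨fun x => if x.val < k then some x else none, by
    intro x y z hx hy
    dsimp only at hx hy
    split_ifs at hx hy
    exact (Option.some.inj hx).trans (Option.some.inj hy).symm⟩

@[simp] theorem idLT_apply (k : ℕ) (x : Fin n) :
    (idLT n k).1 x = if x.val < k then some x else none :=
  rfl

theorem idLT_comp_idLT (j k : ℕ) : (idLT n j).comp (idLT n k) = idLT n (min j k) :=
  ext fun x => by by_cases hj : x.val < j <;> by_cases hk : x.val < k <;> simp [hj, hk]

theorem ran_idLT (k : ℕ) (hk : k ≤ n) : (idLT n k).ran = Set.range (Fin.castLE hk) := by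
  ext y
  simp only [ran, idLT_apply, Set.mem_ofPred_eq, Set.mem_range]
  constructor
  · rintro ⟨x, hx⟩
    split_ifs at hx with hxk
    cases hx
    exact ⟨⟨_, hxk⟩, rfl⟩
  · rintro ⟨i, rfl⟩
    exact ⟨Fin.castLE hk i, by simp⟩

theorem rank_idLT (k : ℕ) (hk : k ≤ n) : (idLT n k).rank = k := by
  rw [rank, ran_idLT k hk, Set.ncard_range_of_injective (Fin.castLE_injective hk), Nat.card_fin]

theorem rank_comp_le_right (f g : PInj n) : (f.comp g).rank ≤ g.rank := by
  refine Set.ncard_le_ncard ?_ (Set.toFinite _)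
  rintro z ⟨x, hx⟩
  obtain ⟨y, -, hy⟩ := Option.bind_eq_some_iff.mp hx
  exact ⟨y, hy⟩

theorem rank_comp_le_left (f g : PInj n) : (f.comp g).rank ≤ f.rank := by
  have hsub : Option.some '' (f.comp g).ran ⊆ g.1 '' f.ran := by
    rintro _ ⟨z, ⟨x, hx⟩, rfl⟩
    obtain ⟨y, hfy, hy⟩ := Option.bind_eq_some_iff.mp hx
    exact ⟨y, ⟨x, hfy⟩, hy⟩
  calc (f.comp g).rank = (Option.some '' (f.comp g).ran).ncard :=
        (Set.ncard_image_of_injective _ (Option.some_injective _)).symm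
    _ ≤ (g.1 '' f.ran).ncard := Set.ncard_le_ncard hsub (Set.toFinite _)
    _ ≤ f.rank := Set.ncard_image_le (Set.toFinite _)

theorem rank_dmul_le (α x y : PInj n) : (dmul α x y).rank ≤ α.rank :=
  (rank_comp_le_left _ _).trans (rank_comp_le_right _ _)

theorem exists_eq_ofPerm_comp_idLT_comp_ofPerm (α : PInj n) :
    ∃ k ≤ n, ∃ σ τ : Equiv.Perm (Fin n), α = ((ofPerm σ).comp (idLT n k)).comp (ofPerm τ) := by
  classical
  let D := {x : Fin n // (α.1 x).isSome}
  have hk : Fintype.card D ≤ n := (Fintype.card_subtype_le _).trans_eq (Fintype.card_fin n)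
  let enum : D → Fin n := fun x => Fin.castLE hk (Fintype.equivFin D x)
  have enum_inj : Function.Injective enum :=
    (Fin.castLE_injective hk).comp (Fintype.equivFin D).injective
  let value : D → Fin n := fun x => (α.1 x).get x.2
  have value_inj : Function.Injective value := fun x y hxy =>
    Subtype.ext (α.2 x y (value y) (hxy ▸ (Option.some_get x.2).symm) (Option.some_get y.2).symm)
  -- `σ` moves the domain of `α` onto `{0, …, k - 1}`, and `τ` then reproduces the values of `α`.
  obtain ⟨σ, hσ⟩ := Equiv.Perm.exists_extending_pair _ enum Subtype.val_injective enum_inj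
  obtain ⟨τ, hτ⟩ := Equiv.Perm.exists_extending_pair enum value enum_inj value_inj
  refine ⟨_, hk, σ, τ, ext fun x => ?_⟩
  by_cases hx : (α.1 x).isSome
  · have hσx : σ x = enum ⟨x, hx⟩ := hσ ⟨x, hx⟩
    have hlt : (enum ⟨x, hx⟩).val < Fintype.card D := (Fintype.equivFin D ⟨x, hx⟩).2
    simp only [comp_apply, ofPerm_apply, Option.bind_some, idLT_apply, hσx, if_pos hlt, hτ]
    exact (Option.some_get hx).symm
  · have hlt : ¬ (σ x).val < Fintype.card D := by
      intro hlt
      set y := (Fintype.equivFin D).symm ⟨_, hlt⟩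
      have : σ y = σ x := (hσ y).trans (Fin.ext (by simp [enum, y]))
      exact hx (σ.injective this ▸ y.2)
    simp [Option.not_isSome_iff_eq_none.mp hx, hlt]

def sandwich (σ τ : Equiv.Perm (Fin n)) : PInj n ≃ PInj n where
  toFun x := ((ofPerm τ).comp x).comp (ofPerm σ)
  invFun x := ((ofPerm τ.symm).comp x).comp (ofPerm σ.symm)
  left_inv x := ext fun p => by simp [Option.bind_assoc]
  right_inv x := ext fun p => by simp [Option.bind_assoc]

theorem sandwich_dmul (σ τ : Equiv.Perm (Fin n)) (β x y : PInj n) :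
    sandwich σ τ (dmul (((ofPerm σ).comp β).comp (ofPerm τ)) x y) =
      dmul β (sandwich σ τ x) (sandwich σ τ y) := by
  simp only [sandwich, Equiv.coe_fn_mk, dmul, comp_assoc]

def products (α : PInj n) : Set (PInj n) := Set.image2 (dmul α) Set.univ Set.univ

theorem image_products_of_map_dmul {β γ : PInj n} (e : PInj n ≃ PInj n)
    (he : ∀ x y, e (dmul β x y) = dmul γ (e x) (e y)) : e '' products β = products γ :=
  Set.image_image2_univ_of_equiv _ _ e he

theorem products_idLT_ssubset {j k : ℕ} (hjk : j < k) (hk : k ≤ n) :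
    products (idLT n j) ⊂ products (idLT n k) := by
  refine (Set.ssubset_iff_of_subset ?_).mpr ⟨idLT n k, ?_, ?_⟩
  · rintro _ ⟨x, -, y, -, rfl⟩
    refine ⟨x.comp (idLT n j), trivial, (idLT n j).comp y, trivial, ?_⟩
    simp only [dmul, comp_assoc]
    rw [← comp_assoc (idLT n k), ← comp_assoc (idLT n j), idLT_comp_idLT, idLT_comp_idLT,
      min_eq_right hjk.le, min_self]
  · exact ⟨idLT n k, trivial, idLT n k, trivial, by simp only [dmul, idLT_comp_idLT, min_self]⟩
  · rintro ⟨x, -, y, -, hxy⟩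
    have := rank_dmul_le (idLT n j) x y
    rw [hxy, rank_idLT k hk, rank_idLT j (hjk.le.trans hk)] at this
    omega

theorem strictMonoOn_ncard_products_idLT :
    StrictMonoOn (fun k => (products (idLT n k)).ncard) (Set.Iic n) :=
  fun _ _ _ hk hjk => Set.ncard_lt_ncard (products_idLT_ssubset hjk hk) (Set.toFinite _)

theorem injOn_idLT : Set.InjOn (idLT n) (Set.Iic n) := fun j hj k hk h => by
  rw [← rank_idLT j hj, ← rank_idLT k hk, h]

end PInj

/-- Up to isomorphism there are exactly `n + 1` semigroups of the form
`(IS_n, *_α)`: there is a set of `n + 1` deforming elements meeting every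
isomorphism class exactly once. -/
theorem card_iso_classes_IS (n : ℕ) :
    ∃ S : Finset (PInj n), S.card = n + 1 ∧
      (∀ α : PInj n, ∃ β ∈ S, ∃ e : PInj n ≃ PInj n, ∀ x y : PInj n,
          e (PInj.dmul α x y) = PInj.dmul β (e x) (e y)) ∧
      (∀ β ∈ S, ∀ γ ∈ S,
        (∃ e : PInj n ≃ PInj n, ∀ x y : PInj n,
            e (PInj.dmul β x y) = PInj.dmul γ (e x) (e y)) → β = γ) := by
  refine ⟨(Finset.Iic n).image (PInj.idLT n), ?_, ?_, ?_⟩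
  · rw [Finset.card_image_of_injOn (by simpa only [Finset.coe_Iic] using PInj.injOn_idLT),
      Nat.card_Iic]
  · intro α
    obtain ⟨k, hk, σ, τ, rfl⟩ := PInj.exists_eq_ofPerm_comp_idLT_comp_ofPerm α
    exact ⟨PInj.idLT n k, Finset.mem_image_of_mem _ (Finset.mem_Iic.mpr hk), PInj.sandwich σ τ,
      PInj.sandwich_dmul σ τ (PInj.idLT n k)⟩
  · rintro _ hβ _ hγ ⟨e, he⟩
    obtain ⟨j, hj, rfl⟩ := Finset.mem_image.mp hβ
    obtain ⟨k, hk, rfl⟩ := Finset.mem_image.mp hγ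
    have hcard : (PInj.idLT n j).products.ncard = (PInj.idLT n k).products.ncard := by
      rw [← PInj.image_products_of_map_dmul e he, Set.ncard_image_of_injective _ e.injective]
    rw [PInj.strictMonoOn_ncard_products_idLT.injOn (Finset.mem_Iic.mp hj) (Finset.mem_Iic.mp hk)
      hcard]
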